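/- arXiv:1712.01781 — 2 statements merged into one kernel-verified Lean document; each statement's English description precedes it below -/
import Mathlib

section
/- For a prime n and a subset A of Z_n with |A| = a, the number of ordered triples (i, j, k) with i, j, k in Z_n forming an arithmetic progression (i.e., i + k = 2j) such that either all of i, j, k lie in A or none of them lies in A equals n^2 - 3*a*n + 3*a^2. -/
/-!
With χ the indicator of A, the indicator of "all of i, j, k in A or none of them" is
1 - χ i - χ j - χ k + χ i χ j + χ j χ k + χ i χ k: the cubic terms of χ i χ j χ k and
(1 - χ i)(1 - χ j)(1 - χ k) cancel. So the count is a signed sum of sums, over all 3-APs, of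
functions of at most two of the three entries. Any two entries of a 3-AP determine it (the middle
one is the half-sum, which is where the invertibility of 2 enters), so each of these sums is a
free double sum over Z_n, giving n², a n and a².
-/

open Finset

variable {R : Type*} [CommRing R] [Fintype R] [DecidableEq R]

variable (R) in
def threeAPs : Finset (R × R × R) := {t | t.1 + t.2.2 = 2 * t.2.1}

section PairSums

variable {M : Type*} [AddCommMonoid M] (g : R → R → M)

theorem sum_threeAPs_fst_snd : ∑ t ∈ threeAPs R, g t.1 t.2.1 = ∑ x, ∑ y, g x y := by
  rw [← Fintype.sum_prod_type']
  refine sum_nbij' (fun t => (t.1, t.2.1)) (fun p => (p.1, p.2, 2 * p.2 - p.1)) ?_ ?_ ?_ ?_ ?_ <;>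
    simp [threeAPs]
  intro i j k h
  linear_combination -h

theorem sum_threeAPs_snd_thd : ∑ t ∈ threeAPs R, g t.2.1 t.2.2 = ∑ x, ∑ y, g x y := by
  rw [← Fintype.sum_prod_type']
  refine sum_nbij' (fun t => (t.2.1, t.2.2)) (fun p => (2 * p.1 - p.2, p.1, p.2)) ?_ ?_ ?_ ?_ ?_ <;>
    simp [threeAPs]
  intro i j k h
  linear_combination -h

theorem sum_threeAPs_fst_thd [Invertible (2 : R)] :
    ∑ t ∈ threeAPs R, g t.1 t.2.2 = ∑ x, ∑ y, g x y := by
  rw [← Fintype.sum_prod_type']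
  refine sum_nbij' (fun t => (t.1, t.2.2)) (fun p => (p.1, ⅟2 * (p.1 + p.2), p.2)) ?_ ?_ ?_ ?_ ?_ <;>
    simp [threeAPs]
  intro i j k h
  simp [h]

end PairSums

theorem ite_all_or_none_eq {S : Type*} [CommRing S] (p q r : Prop) [Decidable p] [Decidable q]
    [Decidable r] :
    (if (p ∧ q ∧ r) ∨ (¬p ∧ ¬q ∧ ¬r) then 1 else 0 : S) =
      1 - (if p then 1 else 0) - (if q then 1 else 0) - (if r then 1 else 0) +
        (if p then 1 else 0) * (if q then 1 else 0) + (if q then 1 else 0) * (if r then 1 else 0) +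
        (if p then 1 else 0) * (if r then 1 else 0) := by
  by_cases p <;> by_cases q <;> by_cases r <;> simp [*]

theorem card_monochromatic_threeAPs [Invertible (2 : R)] (A : Finset R) :
    (#{t ∈ threeAPs R | (t.1 ∈ A ∧ t.2.1 ∈ A ∧ t.2.2 ∈ A) ∨ (t.1 ∉ A ∧ t.2.1 ∉ A ∧ t.2.2 ∉ A)} : ℤ) =
      Fintype.card R ^ 2 - 3 * #A * Fintype.card R + 3 * #A ^ 2 := by
  set χ : R → ℤ := fun x => if x ∈ A then 1 else 0
  have hχ : ∑ x, χ x = #A := by simp [χ]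
  have hcard : ∑ t ∈ threeAPs R, (1 : ℤ) = Fintype.card R ^ 2 := by
    rw [sum_threeAPs_fst_snd fun _ _ => (1 : ℤ)]
    simp [sq]
  have h₁ : ∑ t ∈ threeAPs R, χ t.1 = #A * Fintype.card R := by
    rw [sum_threeAPs_fst_snd fun x _ => χ x]
    simp [← mul_sum, hχ, mul_comm]
  have h₂ : ∑ t ∈ threeAPs R, χ t.2.1 = #A * Fintype.card R := by
    rw [sum_threeAPs_fst_snd fun _ y => χ y]
    simp [hχ, mul_comm]
  have h₃ : ∑ t ∈ threeAPs R, χ t.2.2 = #A * Fintype.card R := by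
    rw [sum_threeAPs_snd_thd fun _ y => χ y]
    simp [hχ, mul_comm]
  have h₁₂ : ∑ t ∈ threeAPs R, χ t.1 * χ t.2.1 = #A ^ 2 := by
    rw [sum_threeAPs_fst_snd fun x y => χ x * χ y]
    simp [← mul_sum, ← sum_mul, hχ, sq]
  have h₂₃ : ∑ t ∈ threeAPs R, χ t.2.1 * χ t.2.2 = #A ^ 2 := by
    rw [sum_threeAPs_snd_thd fun x y => χ x * χ y]
    simp [← mul_sum, ← sum_mul, hχ, sq]
  have h₁₃ : ∑ t ∈ threeAPs R, χ t.1 * χ t.2.2 = #A ^ 2 := by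
    rw [sum_threeAPs_fst_thd fun x y => χ x * χ y]
    simp [← mul_sum, ← sum_mul, hχ, sq]
  have hmono : ∀ t : R × R × R,
      (if (t.1 ∈ A ∧ t.2.1 ∈ A ∧ t.2.2 ∈ A) ∨ (t.1 ∉ A ∧ t.2.1 ∉ A ∧ t.2.2 ∉ A) then 1 else 0) =
        1 - χ t.1 - χ t.2.1 - χ t.2.2 + χ t.1 * χ t.2.1 + χ t.2.1 * χ t.2.2 + χ t.1 * χ t.2.2 :=
    fun t => ite_all_or_none_eq _ _ _
  rw [← sum_boole, sum_congr rfl fun t _ => hmono t]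
  simp only [sum_add_distrib, sum_sub_distrib, hcard, h₁, h₂, h₃, h₁₂, h₂₃, h₁₃]
  ring

/-- For a prime n (odd) and a subset A of Z_n with |A| = a, the number of
ordered triples (i,j,k) in Z_n forming an arithmetic progression (i + k = 2j) that are
monochromatic with respect to A (all in A or all outside A) equals n^2 - 3an + 3a^2. -/
theorem stmt0 (n : ℕ) [Fact n.Prime] (hn : Odd n) (A : Finset (ZMod n)) (a : ℕ)
    (ha : A.card = a) :
    ((Finset.univ.filter (fun t : ZMod n × ZMod n × ZMod n =>
        t.1 + t.2.2 = 2 * t.2.1 ∧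
        ((t.1 ∈ A ∧ t.2.1 ∈ A ∧ t.2.2 ∈ A) ∨
         (t.1 ∉ A ∧ t.2.1 ∉ A ∧ t.2.2 ∉ A)))).card : ℤ)
      = (n : ℤ)^2 - 3 * a * n + 3 * a^2 := by
  have h2 : (2 : ZMod n) ≠ 0 := Ring.two_ne_zero <| by
    rw [ZMod.ringChar_zmod_n]
    rintro rfl
    exact Nat.not_even_iff_odd.mpr hn even_two
  let _ := invertibleOfNonzero h2
  have h := card_monochromatic_threeAPs A
  rw [ZMod.card, ha] at h
  rwa [← filter_filter]
end

section
/- For a prime n, the number of ordered pairs (x, d) in Z_n × Z_n such that the arithmetic progression (x, x+d, x+2d) is monochromatic under a two-coloring of Z_n with color classes of sizes αn and (1-α)n equals (α^3 + (1-α)^3) n^2, where αn is an integer; equivalently, writing a = αn, the count equals (a^3 + (n-a)^3)/n. -/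
/-!
Write `f` for the indicator of the first colour. For any three values,
`f x f y f z + (1 - f x)(1 - f y)(1 - f z) = 1 - (f x + f y + f z) + (f x f y + f x f z + f y f z)`:
the cubic terms cancel. Summed over all `(x, d)`, each linear term contributes `n a`, and each
quadratic term contributes `a²`, because for `i ≠ j` in `{0, 1, 2}` the map
`(x, d) ↦ (x + i d, x + j d)` is a bijection of `Z_n²` once `2` is invertible.
-/

section ArithmeticProgressionSums

variable {R S : Type*} [CommRing R] [Fintype R] [CommRing S]

lemma sum_comp_add_mul {c : R} (hc : IsUnit c) (g : R → S) (y : R) :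
    ∑ d, g (y + c * d) = ∑ x, g x :=
  Fintype.sum_equiv ((Units.mulLeft hc.unit).trans (Equiv.addLeft y)) _ _ fun _ => rfl

lemma sum_prod_comp_add_mul (g : R → S) (i : R) :
    ∑ p : R × R, g (p.1 + i * p.2) = Fintype.card R * ∑ x, g x := by
  have shift (d : R) : ∑ x, g (x + i * d) = ∑ x, g x :=
    Fintype.sum_equiv (Equiv.addRight (i * d)) _ _ fun _ => rfl
  rw [Fintype.sum_prod_type, Finset.sum_comm]
  simp only [shift, Finset.sum_const, Finset.card_univ, nsmul_eq_mul]

lemma sum_prod_mul_comp_add_mul {i j : R} (hij : IsUnit (j - i)) (g : R → S) :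
    ∑ p : R × R, g (p.1 + i * p.2) * g (p.1 + j * p.2) = (∑ x, g x) ^ 2 := by
  have shift (d : R) : ∑ x, g (x + i * d) * g (x + j * d) = ∑ y, g y * g (y + (j - i) * d) :=
    Fintype.sum_equiv (Equiv.addRight (i * d)) _ _ fun x => by
      simp only [Equiv.coe_addRight]; ring_nf
  rw [Fintype.sum_prod_type, Finset.sum_comm]
  simp_rw [shift]
  rw [Finset.sum_comm]
  simp_rw [← Finset.mul_sum, sum_comp_add_mul hij, ← Finset.sum_mul, sq]

theorem sum_monochromatic_threeAP (h2 : IsUnit (2 : R)) (f : R → S) :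
    ∑ p : R × R, (f p.1 * f (p.1 + p.2) * f (p.1 + 2 * p.2)
        + (1 - f p.1) * (1 - f (p.1 + p.2)) * (1 - f (p.1 + 2 * p.2)))
      = (Fintype.card R : S) ^ 2 - 3 * (∑ x, f x) * Fintype.card R + 3 * (∑ x, f x) ^ 2 := by
  have q01 := sum_prod_mul_comp_add_mul (i := 0) (j := 1) (by simp) f
  have q02 := sum_prod_mul_comp_add_mul (i := 0) (j := 2) (by simpa using h2) f
  have q12 := sum_prod_mul_comp_add_mul (i := 1) (j := 2) (by norm_num) f
  have l0 := sum_prod_comp_add_mul f 0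
  have l1 := sum_prod_comp_add_mul f 1
  have l2 := sum_prod_comp_add_mul f 2
  simp only [zero_mul, add_zero, one_mul] at q01 q02 q12 l0 l1 l2
  have cubic_cancel (u v w : S) : u * v * w + (1 - u) * (1 - v) * (1 - w)
      = 1 - u - v - w + u * v + u * w + v * w := by ring
  simp only [cubic_cancel, Finset.sum_add_distrib, Finset.sum_sub_distrib, q01, q02, q12,
    l0, l1, l2, Finset.sum_const, Finset.card_univ, Fintype.card_prod, nsmul_eq_mul, mul_one]
  push_cast
  ring

end ArithmeticProgressionSums

/-- For an odd prime n and a two-coloring of Z_n with color classes of sizes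
a = αn and n - a, the number of pairs (x,d) such that (x, x+d, x+2d) is monochromatic
equals n^2 - 3an + 3a^2; equivalently, n times the count equals a^3 + (n-a)^3. -/
theorem stmt1 (n : ℕ) [Fact n.Prime] (hn : Odd n) (A : Finset (ZMod n)) (a : ℕ)
    (ha : A.card = a) :
    ((Finset.univ.filter (fun p : ZMod n × ZMod n =>
        (p.1 ∈ A ∧ p.1 + p.2 ∈ A ∧ p.1 + 2 * p.2 ∈ A) ∨
        (p.1 ∉ A ∧ p.1 + p.2 ∉ A ∧ p.1 + 2 * p.2 ∉ A))).card : ℤ)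
        = (n : ℤ)^2 - 3 * a * n + 3 * a^2 ∧
    ((Finset.univ.filter (fun p : ZMod n × ZMod n =>
        (p.1 ∈ A ∧ p.1 + p.2 ∈ A ∧ p.1 + 2 * p.2 ∈ A) ∨
        (p.1 ∉ A ∧ p.1 + p.2 ∉ A ∧ p.1 + 2 * p.2 ∉ A))).card : ℤ) * n
        = (a : ℤ)^3 + ((n : ℤ) - a)^3 := by
  refine (and_iff_left_of_imp fun count => by rw [count]; ring).mpr ?_
  set f : ZMod n → ℤ := fun x => if x ∈ A then 1 else 0
  have two_isUnit : IsUnit (2 : ZMod n) := by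
    exact_mod_cast (ZMod.isUnit_iff_coprime 2 n).mpr (Nat.coprime_two_left.mpr hn)
  have sum_f : ∑ x, f x = a := by simp [f, Finset.sum_ite_mem, ha]
  have sums := sum_monochromatic_threeAP two_isUnit f
  rw [ZMod.card, sum_f] at sums
  rw [Finset.natCast_card_filter, ← sums]
  refine Finset.sum_congr rfl fun p _ => ?_
  by_cases hx : p.1 ∈ A <;> by_cases hy : p.1 + p.2 ∈ A <;> by_cases hz : p.1 + 2 * p.2 ∈ A <;>
    simp [f, hx, hy, hz]
end
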